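/- arXiv:2311.18808 — 6 statements merged into one kernel-verified Lean document; each statement's English description precedes it below -/
import Mathlib

section
/- Let X be a spectral space, i.e. a quasi-compact sober topological space in which the quasi-compact open subsets form a basis and are closed under finite intersections. Equip X with the specialization order (y ≤ x if and only if y lies in the closure of {x}) and with the patch (constructible) topology, namely the topology generated by the quasi-compact open subsets of X together with their complements. Then the specialization order satisfies the Priestley separation axiom with respect to the patch topology: whenever x ≰ y there exists a subset U ⊆ X which is clopen in the patch topology and is an up-set for the specialization order, with x ∈ U and y ∉ U. -/
/-- Let `X` be a spectral space (quasi-compact, sober, quasi-compact opens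
form a basis closed under finite intersections).  Equip `X` with the specialization order
(`y ≤ x` iff `y ∈ closure {x}`) and the patch (constructible) topology, generated by the
quasi-compact open subsets together with their complements.  Then the specialization order
satisfies the Priestley separation axiom with respect to the patch topology: whenever
`x ≰ y` there is a patch-clopen up-set `U` with `x ∈ U` and `y ∉ U`. -/
theorem spectral_priestley_separation
    {X : Type*} [TopologicalSpace X]
    (hcpt : CompactSpace X)
    (hinter : ∀ U V : Set X, IsOpen U → IsCompact U → IsOpen V → IsCompact V →
      IsCompact (U ∩ V))
    (hbasis : TopologicalSpace.IsTopologicalBasis {U : Set X | IsOpen U ∧ IsCompact U})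
    (hsober : ∀ C : Set X, IsClosed C → IsIrreducible C → ∃! x : X, closure {x} = C)
    (x y : X) (hxy : x ∉ closure {y}) :
    ∃ U : Set X,
      @IsClopen X
        (TopologicalSpace.generateFrom
          ({U : Set X | IsOpen U ∧ IsCompact U} ∪
            (compl '' {U : Set X | IsOpen U ∧ IsCompact U}))) U ∧
      (∀ z w : X, z ∈ U → z ∈ closure {w} → w ∈ U) ∧ x ∈ U ∧ y ∉ U := by
  -- x lies in the open set (closure {y})ᶜ; shrink to a compact open basis element U.
  obtain ⟨U, hU, hxU, hUsub⟩ := hbasis.exists_subset_of_mem_open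
    (by simpa using hxy) (isClosed_closure (s := ({y} : Set X))).isOpen_compl
  refine ⟨U, ?_, ?_, hxU, fun hyU => (hUsub hyU) (subset_closure rfl)⟩
  · exact ⟨@IsClosed.mk X
        (TopologicalSpace.generateFrom
          ({U : Set X | IsOpen U ∧ IsCompact U} ∪
            (compl '' {U : Set X | IsOpen U ∧ IsCompact U}))) U
        (TopologicalSpace.GenerateOpen.basic _ (Or.inr ⟨U, hU, rfl⟩)),
      TopologicalSpace.GenerateOpen.basic _ (Or.inl hU)⟩
  · intro z w hzU hzw
    have := mem_closure_iff.mp hzw U hU.1 hzU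
    simpa using this
end

section
/- Let (P, ≤) be a Priestley space with Thomason derivative operation δ and Thomason height function ht. Then: (a) if p < q in P and ht(q) is an ordinal, then ht(p) is an ordinal and ht(p) < ht(q); (b) if S ⊆ P is a closed subset and a ∈ S is not an isolated point of the subspace S and ht(a) is an ordinal, then there exists s ∈ S with ht(s) an ordinal and ht(s) < ht(a). Consequently, if the Thomason filtration of P is exhaustive, then ht is a dispersion on P. -/
section Thomason

variable {P : Type*} [TopologicalSpace P] [PartialOrder P]

/-- A Thomason point of a subset `A` of an ordered topological space: a point of `A` which is
both topologically isolated in the subspace `A` and minimal in `A` for the order. -/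
def IsThomasonPointIn (A : Set P) (p : P) : Prop :=
  p ∈ A ∧ (∃ U : Set P, IsOpen U ∧ U ∩ A = {p}) ∧ ∀ q ∈ A, q ≤ p → q = p

/-- The Thomason derivative: remove all Thomason points. -/
def thomDeriv (A : Set P) : Set P := {p ∈ A | ¬ IsThomasonPointIn A p}

/-- The transfinite iterates of the Thomason derivative, starting from the whole space:
`δ⁰P = P`, `δ^{λ+1}P = δ(δ^λ P)`, and intersections at limit stages. -/
noncomputable def thomIter (P : Type*) [TopologicalSpace P] [PartialOrder P]
    (lam : Ordinal) : Set P :=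
  Ordinal.limitRecOn lam Set.univ (fun _ ih => thomDeriv ih)
    (fun o _ ih => ⋂ (o' : Ordinal), ⋂ (h : o' < o), ih o' h)

/-- `p` has Thomason height `λ` when `p ∈ δ^λ P \ δ^{λ+1} P`. -/
def HasThomasonHeight (p : P) (lam : Ordinal) : Prop :=
  p ∈ thomIter P lam ∧ p ∉ thomIter P (lam + 1)

end Thomason

/-!
A point of height `μ` is a Thomason point of `δ^μ P`. Being minimal there, every point strictly
below it lies outside `δ^μ P`; being isolated there, it stays isolated in every subset of
`δ^μ P`, so a set on which it is not isolated leaves `δ^μ P`. Finally, a point outside `δ^μ P`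
has a height below `μ`, because the iterates decrease and are intersections at limit stages.
-/

section Thomason

variable {P : Type*} [TopologicalSpace P] [PartialOrder P]

theorem thomDeriv_subset (A : Set P) : thomDeriv A ⊆ A := fun _ hp => hp.1

theorem thomIter_zero : thomIter P 0 = Set.univ :=
  Ordinal.limitRecOn_zero ..

theorem thomIter_add_one (lam : Ordinal) :
    thomIter P (lam + 1) = thomDeriv (thomIter P lam) :=
  Ordinal.limitRecOn_add_one ..

theorem thomIter_of_isSuccLimit {lam : Ordinal} (h : Order.IsSuccLimit lam) :
    thomIter P lam = ⋂ o < lam, thomIter P o :=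
  Ordinal.limitRecOn_limit _ _ _ _ h

theorem thomIter_subset_of_lt {μ lam : Ordinal} (h : μ < lam) :
    thomIter P lam ⊆ thomIter P μ := by
  induction lam using Ordinal.limitRecOn generalizing μ with
  | zero => exact absurd h (not_lt_bot (a := μ))
  | add_one o ih =>
    rw [thomIter_add_one]
    obtain rfl | hμo := (Order.lt_add_one_iff.mp h).eq_or_lt
    · exact thomDeriv_subset _
    · exact (thomDeriv_subset _).trans (ih hμo)
  | limit o ho _ =>
    rw [thomIter_of_isSuccLimit ho]
    exact Set.biInter_subset_of_mem h

theorem thomIter_antitone : Antitone (thomIter P) := fun _ _ h =>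
  h.eq_or_lt.elim (fun h => h ▸ subset_rfl) thomIter_subset_of_lt

theorem exists_hasThomasonHeight_lt_of_notMem {p : P} {μ : Ordinal} (hp : p ∉ thomIter P μ) :
    ∃ ν, HasThomasonHeight p ν ∧ ν < μ := by
  induction μ using Ordinal.limitRecOn with
  | zero => exact absurd (Set.mem_univ p) (thomIter_zero (P := P) ▸ hp)
  | add_one κ ih =>
    by_cases hκ : p ∈ thomIter P κ
    · exact ⟨κ, ⟨hκ, hp⟩, lt_add_one κ⟩
    · obtain ⟨ν, hν, hνκ⟩ := ih hκ
      exact ⟨ν, hν, hνκ.trans (lt_add_one κ)⟩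
  | limit o ho ih =>
    rw [thomIter_of_isSuccLimit ho] at hp
    simp only [Set.mem_iInter, not_forall] at hp
    obtain ⟨o', ho', hpo'⟩ := hp
    obtain ⟨ν, hν, hνo'⟩ := ih o' ho' hpo'
    exact ⟨ν, hν, hνo'.trans ho'⟩

theorem HasThomasonHeight.unique {p : P} {μ ν : Ordinal}
    (hμ : HasThomasonHeight p μ) (hν : HasThomasonHeight p ν) : μ = ν := by
  have le_of_mem {μ ν : Ordinal} (hμ : HasThomasonHeight p μ) (hν : p ∈ thomIter P ν) :
      ν ≤ μ :=
    not_lt.mp fun h => hμ.2 (thomIter_antitone (Order.add_one_le_of_lt h) hν)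
  exact le_antisymm (le_of_mem hν hμ.1) (le_of_mem hμ hν.1)

theorem HasThomasonHeight.isThomasonPointIn {p : P} {μ : Ordinal}
    (h : HasThomasonHeight p μ) : IsThomasonPointIn (thomIter P μ) p :=
  not_not.mp fun hp => h.2 (thomIter_add_one (P := P) μ ▸ ⟨h.1, hp⟩)

theorem IsThomasonPointIn.isolated_of_subset {A S : Set P} {a : P}
    (ha : IsThomasonPointIn A a) (haS : a ∈ S) (hSA : S ⊆ A) :
    ∃ U : Set P, IsOpen U ∧ U ∩ S = {a} := by
  obtain ⟨-, ⟨U, hU, hUA⟩, -⟩ := ha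
  have haU : a ∈ U := (hUA.symm ▸ Set.mem_singleton a : a ∈ U ∩ A).1
  have hUS : U ∩ S ⊆ {a} := hUA ▸ Set.inter_subset_inter_right U hSA
  exact ⟨U, hU, Set.Subset.antisymm hUS (Set.singleton_subset_iff.mpr ⟨haU, haS⟩)⟩

theorem HasThomasonHeight.exists_lt_of_lt {p q : P} {μ : Ordinal} (hpq : p < q)
    (hq : HasThomasonHeight q μ) : ∃ ν, HasThomasonHeight p ν ∧ ν < μ :=
  exists_hasThomasonHeight_lt_of_notMem fun hp =>
    hpq.ne (hq.isThomasonPointIn.2.2 p hp hpq.le)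

theorem HasThomasonHeight.exists_lt_of_not_isolated {S : Set P} {a : P} {μ : Ordinal}
    (ha : HasThomasonHeight a μ) (haS : a ∈ S)
    (hnis : ¬ ∃ U : Set P, IsOpen U ∧ U ∩ S = {a}) :
    ∃ s ∈ S, ∃ ν, HasThomasonHeight s ν ∧ ν < μ := by
  have hSμ : ¬ S ⊆ thomIter P μ := fun hSμ =>
    hnis (ha.isThomasonPointIn.isolated_of_subset haS hSμ)
  obtain ⟨s, hsS, hs⟩ := Set.not_subset.mp hSμ
  exact ⟨s, hsS, exists_hasThomasonHeight_lt_of_notMem hs⟩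

end Thomason

theorem thomason_height_is_dispersion_general
    {P : Type*} [TopologicalSpace P] [PartialOrder P] :
    (∀ p q : P, p < q → ∀ μ : Ordinal, HasThomasonHeight q μ →
        ∃ ν : Ordinal, HasThomasonHeight p ν ∧ ν < μ) ∧
    (∀ S : Set P, IsClosed S → ∀ a ∈ S, (¬ ∃ U : Set P, IsOpen U ∧ U ∩ S = {a}) →
        ∀ μ : Ordinal, HasThomasonHeight a μ →
          ∃ s ∈ S, ∃ ν : Ordinal, HasThomasonHeight s ν ∧ ν < μ) ∧
    (∀ h : P → Ordinal, (∀ p : P, HasThomasonHeight p (h p)) →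
        (∀ p q : P, p < q → h p < h q) ∧
        (∀ S : Set P, IsClosed S → ∀ a ∈ S,
          (¬ ∃ U : Set P, IsOpen U ∧ U ∩ S = {a}) → ∃ s ∈ S, h s < h a)) := by
  refine ⟨fun p q hpq μ hq => hq.exists_lt_of_lt hpq,
    fun S _ a haS hnis μ ha => ha.exists_lt_of_not_isolated haS hnis,
    fun ht hht => ⟨fun p q hpq => ?_, fun S _ a haS hnis => ?_⟩⟩
  · obtain ⟨ν, hν, hνq⟩ := (hht q).exists_lt_of_lt hpq
    exact (hht p).unique hν ▸ hνq
  · obtain ⟨s, hsS, ν, hν, hνa⟩ := (hht a).exists_lt_of_not_isolated haS hnis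
    exact ⟨s, hsS, (hht s).unique hν ▸ hνa⟩

/-- Let `(P, ≤)` be a Priestley space with Thomason height function `ht`.
(a) If `p < q` and `ht q` is an ordinal, then `ht p` is an ordinal and `ht p < ht q`.
(b) If `S ⊆ P` is closed, `a ∈ S` is not isolated in the subspace `S`, and `ht a` is an
ordinal, then there is `s ∈ S` whose height is an ordinal smaller than `ht a`.
Consequently, if the Thomason filtration is exhaustive then the Thomason height is a
dispersion on `P`. -/
theorem thomason_height_is_dispersion
    {P : Type*} [TopologicalSpace P] [PartialOrder P] [CompactSpace P]
    (hsep : ∀ x y : P, ¬ x ≤ y →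
      ∃ U : Set P, IsClopen U ∧ (∀ z w : P, z ∈ U → z ≤ w → w ∈ U) ∧ x ∈ U ∧ y ∉ U) :
    (∀ p q : P, p < q → ∀ μ : Ordinal, HasThomasonHeight q μ →
        ∃ ν : Ordinal, HasThomasonHeight p ν ∧ ν < μ) ∧
    (∀ S : Set P, IsClosed S → ∀ a ∈ S, (¬ ∃ U : Set P, IsOpen U ∧ U ∩ S = {a}) →
        ∀ μ : Ordinal, HasThomasonHeight a μ →
          ∃ s ∈ S, ∃ ν : Ordinal, HasThomasonHeight s ν ∧ ν < μ) ∧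
    (∀ h : P → Ordinal, (∀ p : P, HasThomasonHeight p (h p)) →
        (∀ p q : P, p < q → h p < h q) ∧
        (∀ S : Set P, IsClosed S → ∀ a ∈ S,
          (¬ ∃ U : Set P, IsOpen U ∧ U ∩ S = {a}) → ∃ s ∈ S, h s < h a)) :=
  thomason_height_is_dispersion_general
end

section
/- Let (P, ≤) be a Priestley space that admits a dispersion. Then every point p ∈ P is weakly visible: writing ↑p = { q ∈ P : p ≤ q } for the upwards closure of p (a closed up-set), there exists an open down-set U ⊆ P such that ↑p ∩ U = {p}. In other words, {p} can be written as the intersection of a closed up-set (namely ↑p) and an open down-set. -/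
/-- Let `(P, ≤)` be a Priestley space admitting a dispersion
`χ : P → Ord`.  Then every point `p ∈ P` is weakly visible: there is an open down-set
`U ⊆ P` with `↑p ∩ U = {p}`, where `↑p = {q | p ≤ q}` is the (closed) upwards closure of
`p`.  In other words `{p}` is the intersection of a closed up-set and an open down-set. -/
theorem dispersible_weakly_visible
    {P : Type*} [TopologicalSpace P] [PartialOrder P] [CompactSpace P]
    (hsep : ∀ x y : P, ¬ x ≤ y →
      ∃ U : Set P, IsClopen U ∧ (∀ z w : P, z ∈ U → z ≤ w → w ∈ U) ∧ x ∈ U ∧ y ∉ U)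
    (χ : P → Ordinal)
    (hχ₁ : ∀ p q : P, p < q → χ p < χ q)
    (hχ₂ : ∀ S : Set P, IsClosed S → ∀ a ∈ S,
      (¬ ∃ U : Set P, IsOpen U ∧ U ∩ S = {a}) → ∃ s ∈ S, χ s < χ a)
    (p : P) :
    ∃ U : Set P, IsOpen U ∧ (∀ z w : P, z ∈ U → w ≤ z → w ∈ U) ∧
      {q : P | p ≤ q} ∩ U = {p} := by
  -- the up-set ↑p is closed
  have hclosed : IsClosed {q : P | p ≤ q} := by
    rw [← isOpen_compl_iff, isOpen_iff_forall_mem_open]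
    intro q hq
    obtain ⟨U, hU, hup, hpU, hqU⟩ := hsep p q hq
    exact ⟨Uᶜ, fun r hr hpr => hr (hup p r hpU hpr), hU.compl.isOpen, hqU⟩
  have hpmem : p ∈ {q : P | p ≤ q} := le_refl p
  -- p is a strict χ-minimum on ↑p, so by the dispersion property there is an
  -- open V with V ∩ ↑p = {p}
  obtain ⟨V, hVopen, hV⟩ : ∃ V : Set P, IsOpen V ∧ V ∩ {q : P | p ≤ q} = {p} := by
    by_contra h
    obtain ⟨s, hs, hlt⟩ := hχ₂ _ hclosed p hpmem h
    rcases eq_or_lt_of_le (hs : p ≤ s) with rfl | hlt'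
    · exact absurd hlt (lt_irrefl _)
    · exact absurd hlt (not_lt.2 (hχ₁ _ _ hlt').le)
  have hpV : p ∈ V := by
    have : p ∈ V ∩ {q : P | p ≤ q} := by rw [hV]; rfl
    exact this.1
  -- K := ↑p \ V is compact
  have hKclosed : IsClosed ({q : P | p ≤ q} \ V) := hclosed.sdiff hVopen
  have hKcomp : IsCompact ({q : P | p ≤ q} \ V) := hKclosed.isCompact
  -- clopen up-sets separating points of K from p
  have hWex : ∀ q ∈ {q : P | p ≤ q} \ V,
      ∃ W : Set P, IsClopen W ∧ (∀ z w : P, z ∈ W → z ≤ w → w ∈ W) ∧ q ∈ W ∧ p ∉ W := by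
    intro q hq
    have hqp : ¬ q ≤ p := by
      intro hle
      exact hq.2 ((le_antisymm hle hq.1) ▸ hpV)
    exact hsep q p hqp
  choose W hWclopen hWup hWmem hWp using hWex
  have hcover : ({q : P | p ≤ q} \ V) ⊆ ⋃ q : ↥({q : P | p ≤ q} \ V), W q q.2 :=
    fun q hq => Set.mem_iUnion.2 ⟨⟨q, hq⟩, hWmem q hq⟩
  obtain ⟨F, hF⟩ := hKcomp.elim_finite_subcover (fun q : ↥({q : P | p ≤ q} \ V) => W q q.2)
    (fun q => (hWclopen q q.2).isOpen) hcover
  refine ⟨(⋃ q ∈ F, W q q.2)ᶜ, ?_, ?_, ?_⟩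
  · exact (F.finite_toSet.isClosed_biUnion fun q _ => (hWclopen q q.2).isClosed).isOpen_compl
  · intro z w hz hwz hw
    obtain ⟨q, hqF, hwq⟩ := Set.mem_iUnion₂.1 hw
    exact hz (Set.mem_iUnion₂.2 ⟨q, hqF, hWup q q.2 w z hwq hwz⟩)
  · ext r
    constructor
    · rintro ⟨hpr, hrU⟩
      by_cases hrV : r ∈ V
      · have : r ∈ V ∩ {q : P | p ≤ q} := ⟨hrV, hpr⟩
        rw [hV] at this
        exact this
      · exact absurd (hF ⟨hpr, hrV⟩) hrU
    · rintro rfl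
      refine ⟨hpmem, ?_⟩
      intro hmem
      obtain ⟨q, _, hq⟩ := Set.mem_iUnion₂.1 hmem
      exact hWp q q.2 hq
end

section
/- Let G be a compact Lie group with identity component G_e. Then the map Sub(G) → Sub(G_e) sending a closed subgroup H to H ∩ G_e is continuous, where both Sub(G) and Sub(G_e) carry the h-topology (the topology of the Hausdorff metric on closed subgroups). -/
open TopologicalSpace

/-- A topological group is a Lie group if it carries a compatible smooth manifold
structure modelled on some Euclidean space making multiplication and inversion smooth. -/
def IsLieGroupStruct (G : Type*) [TopologicalSpace G] [Group G] : Prop :=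
  ∃ n : ℕ, ∃ _ : ChartedSpace (EuclideanSpace ℝ (Fin n)) G,
    LieGroup (modelWithCornersSelf ℝ (EuclideanSpace ℝ (Fin n))) (⊤ : ℕ∞) G

/-- A metric on a group is bi-invariant if left and right translations are isometries. -/
def BiInvariantMetric (G : Type*) [Group G] [MetricSpace G] : Prop :=
  ∀ g x y : G, dist (g * x) (g * y) = dist x y ∧ dist (x * g) (y * g) = dist x y

/-- The space `Sub(G)` of closed subgroups of `G`. -/
abbrev SubG (G : Type*) [Group G] [TopologicalSpace G] :=
  {H : Subgroup G // IsClosed (H : Set G)}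

/-- The `h`-topology on `Sub(G)`, induced by the Hausdorff (extended) metric on the
space of closed subsets of the metric space `G`. -/
noncomputable instance SubG.instTopologicalSpace (G : Type*) [Group G] [MetricSpace G] :
    TopologicalSpace (SubG G) :=
  TopologicalSpace.induced
    (fun H : SubG G => (⟨(H.1 : Set G), H.2⟩ : TopologicalSpace.Closeds G))
    inferInstance

/-- The map `Sub(G) → Sub(G_e)` sending a closed subgroup `H` to `H ∩ G_e`,
viewed as a closed subgroup of `G_e`. -/
def restrictSub {G : Type*} [Group G] [MetricSpace G] (Ge : Subgroup G) (H : SubG G) :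
    SubG ↥Ge :=
  ⟨H.1.subgroupOf Ge, H.2.preimage continuous_subtype_val⟩

/-! Restricting `H` to the identity component is the preimage under the inclusion `G_e → G`.
In a compact Lie group `G_e` is open (manifolds are locally connected) and compact, so some
`δ`-thickening of it stays inside it; then every point of `G_e` that is Hausdorff-close to a
closed set is close to a point of that set which again lies in `G_e`, so restriction to `G_e`
does not increase Hausdorff distances below `δ`. -/

open Metric

theorem Metric.hausdorffEDist_preimage_val_le {X : Type*} [PseudoEMetricSpace X] {U s t : Set X}
    {δ : ℝ} (hU : thickening δ U ⊆ U) (hst : hausdorffEDist s t < ENNReal.ofReal δ) :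
    hausdorffEDist (Subtype.val ⁻¹' s : Set U) (Subtype.val ⁻¹' t) ≤ hausdorffEDist s t := by
  refine le_of_forall_gt_imp_ge_of_dense fun r hr => ?_
  set r' := min r (ENNReal.ofReal δ)
  have close_in_U : ∀ {a b : Set X}, hausdorffEDist a b < r' →
      ∀ x ∈ (Subtype.val ⁻¹' a : Set U), ∃ y ∈ (Subtype.val ⁻¹' b : Set U), edist x y ≤ r' := by
    intro a b hab x hx
    obtain ⟨y, hy, hxy⟩ := exists_edist_lt_of_hausdorffEDist_lt (x := (x : X)) hx hab
    have hyU : y ∈ U := hU <| (mem_thickening_iff_exists_edist_lt U y).2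
      ⟨x, x.2, by rw [edist_comm]; exact hxy.trans_le (min_le_right _ _)⟩
    exact ⟨⟨y, hyU⟩, hy, hxy.le⟩
  have hr' : hausdorffEDist s t < r' := lt_min hr hst
  calc hausdorffEDist (Subtype.val ⁻¹' s : Set U) (Subtype.val ⁻¹' t)
      ≤ r' := hausdorffEDist_le_of_mem_edist (close_in_U hr')
          (close_in_U (hausdorffEDist_comm (s := s) ▸ hr'))
    _ ≤ r := min_le_left _ _

namespace TopologicalSpace.Closeds

variable {X : Type*} [EMetricSpace X] {U : Set X}

theorem continuous_preimage_val_of_thickening_subset {δ : ℝ} (hδ : 0 < δ)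
    (hU : thickening δ U ⊆ U) :
    Continuous fun C : Closeds X => C.preimage (continuous_subtype_val (p := (· ∈ U))) := by
  rw [EMetric.continuous_iff]
  refine fun C ε hε =>
    ⟨min (ENNReal.ofReal δ) ε, lt_min (ENNReal.ofReal_pos.2 hδ) hε, fun D hD => ?_⟩
  calc hausdorffEDist (Subtype.val ⁻¹' (D : Set X) : Set U) (Subtype.val ⁻¹' (C : Set X))
      ≤ hausdorffEDist (D : Set X) C :=
        hausdorffEDist_preimage_val_le hU (hD.trans_le (min_le_left _ _))
    _ < ε := hD.trans_le (min_le_right _ _)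

theorem continuous_preimage_val_of_isCompact_of_isOpen (hc : IsCompact U) (ho : IsOpen U) :
    Continuous fun C : Closeds X => C.preimage (continuous_subtype_val (p := (· ∈ U))) := by
  obtain ⟨δ, hδ, hU⟩ := hc.exists_thickening_subset_open ho subset_rfl
  exact continuous_preimage_val_of_thickening_subset hδ hU

end TopologicalSpace.Closeds

theorem restrictSub_continuous_general
    {G : Type*} [Group G] [MetricSpace G] [CompactSpace G]
    (hlie : IsLieGroupStruct G)
    (Ge : Subgroup G) (hGe : (Ge : Set G) = connectedComponent (1 : G)) :
    Continuous (restrictSub Ge) := by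
  obtain ⟨n, _, -⟩ := hlie
  have := ChartedSpace.locallyConnectedSpace (EuclideanSpace ℝ (Fin n)) G
  have hopen : IsOpen (Ge : Set G) := hGe ▸ isOpen_connectedComponent
  have hcompact : IsCompact (Ge : Set G) := hGe ▸ isClosed_connectedComponent.isCompact
  exact continuous_induced_rng.2 <|
    (Closeds.continuous_preimage_val_of_isCompact_of_isOpen hcompact hopen).comp
      (continuous_induced_dom (f := fun H : SubG G => (⟨H.1, H.2⟩ : Closeds G)))

/-- Let `G` be a compact Lie group with identity component `G_e`.
Then the map `Sub(G) → Sub(G_e)`, `H ↦ H ∩ G_e`, is continuous for the `h`-topologies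
(the topologies of the Hausdorff metric on closed subgroups). -/
theorem restrictSub_continuous
    {G : Type*} [Group G] [MetricSpace G] [IsTopologicalGroup G] [CompactSpace G]
    (hbi : BiInvariantMetric G) (hlie : IsLieGroupStruct G)
    (Ge : Subgroup G) (hGe : (Ge : Set G) = connectedComponent (1 : G)) :
    Continuous (restrictSub Ge) :=
  restrictSub_continuous_general hlie Ge hGe
end

section
/- In the H(S, σ) setting: the set S⁺ = { t ∈ T : σ(w)⁻¹ t σ(w) t⁻¹ ∈ S for all w ∈ W } is a subgroup of T containing S, it satisfies the same two conditions imposed on S (invariance σ(w)⁻¹ S⁺ σ(w) = S⁺ for all w, and σ(v)σ(w)σ(vw)⁻¹ ∈ S⁺ for all v, w), and the normalizer of H(S, σ) in G is exactly H(S⁺, σ); that is, N_G(H(S, σ)) = { σ(w)t : w ∈ W, t ∈ S⁺ }. -/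
/-- The set `H(S, σ) = { σ(w) s : w ∈ W, s ∈ S }` of a full subgroup datum. -/
def fullSet {G : Type*} [Group G] (T : Subgroup G) (σ : G ⧸ T → G) (S : Set G) : Set G :=
  {g : G | ∃ w : G ⧸ T, ∃ s ∈ S, g = σ w * s}

/-- The set `S⁺ = { t ∈ T : σ(w)⁻¹ t σ(w) t⁻¹ ∈ S for all w ∈ W }`. -/
def splusSet {G : Type*} [Group G] (T : Subgroup G) (σ : G ⧸ T → G) (S : Subgroup G) :
    Set G :=
  {t : G | t ∈ T ∧ ∀ w : G ⧸ T, (σ w)⁻¹ * t * σ w * t⁻¹ ∈ S}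

/-!
Since `T` is abelian, conjugation of `T` by `g` depends only on the coset `π g`; writing
`g = σ(π g) t` with `t ∈ T` this makes `S` normal in `G` and identifies `S⁺` with the elements of
`T` that are central modulo `S`, i.e. `T ⊓ S.upperCentralSeriesStep`, the preimage of the centre
of `G ⧸ S`. This gives the subgroup and invariance claims. An element central modulo `S`
normalizes every subgroup containing `S`, so `H(S⁺, σ) ⊆ N(H(S, σ))`. Conversely, for `g` in the
normalizer, `t = σ(π g)⁻¹ g` lies in `T` and normalizes `H(S, σ)`, and `t σ(v) t⁻¹ ∈ H(S, σ)` lies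
over `v`, which says exactly `σ(v)⁻¹ t σ(v) t⁻¹ ∈ S`.
-/

open scoped commutatorElement

namespace Subgroup

variable {G : Type*} [Group G]

instance normal_upperCentralSeriesStep (N : Subgroup G) [N.Normal] :
    N.upperCentralSeriesStep.Normal := by
  rw [upperCentralSeriesStep_eq_comap_center]
  infer_instance

theorem le_upperCentralSeriesStep (N : Subgroup G) [N.Normal] : N ≤ N.upperCentralSeriesStep :=
  fun x hx y => by
    simpa only [commutatorElement_def, mul_assoc] using
      N.mul_mem hx (Normal.conj_mem ‹_› _ (N.inv_mem hx) y)

theorem upperCentralSeriesStep_le_normalizer {N H : Subgroup G} [N.Normal] (hNH : N ≤ H) :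
    N.upperCentralSeriesStep ≤ normalizer (H : Set G) := fun t ht h => by
  rw [SetLike.mem_coe, SetLike.mem_coe, show t * h * t⁻¹ = ⁅t, h⁆ * h by group,
    H.mul_mem_cancel_left (hNH (ht h))]

end Subgroup

open Subgroup

section FullSubgroup

variable {G : Type*} [Group G] {T : Subgroup G} {σ : G ⧸ T → G}

theorem conj_eq_of_mk_eq [T.Normal] (hTab : ∀ a b : G, a ∈ T → b ∈ T → a * b = b * a)
    {t : G} (ht : t ∈ T) {g g' : G} (hgg' : (g : G ⧸ T) = g') :
    g⁻¹ * t * g = g'⁻¹ * t * g' := by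
  have hu : g⁻¹ * g' ∈ T := QuotientGroup.eq.mp hgg'
  have hconj : g⁻¹ * t * g ∈ T := by simpa using Normal.conj_mem inferInstance t ht g⁻¹
  calc g⁻¹ * t * g
      = (g⁻¹ * g')⁻¹ * ((g⁻¹ * g') * (g⁻¹ * t * g)) := by group
    _ = (g⁻¹ * g')⁻¹ * ((g⁻¹ * t * g) * (g⁻¹ * g')) := by rw [hTab _ _ hu hconj]
    _ = g'⁻¹ * t * g' := by group

theorem conj_eq_sigma_conj [T.Normal] (hTab : ∀ a b : G, a ∈ T → b ∈ T → a * b = b * a)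
    (hσ : ∀ w : G ⧸ T, (QuotientGroup.mk (σ w) : G ⧸ T) = w) {t : G} (ht : t ∈ T) (g : G) :
    g * t * g⁻¹ = (σ (g⁻¹ : G))⁻¹ * t * σ (g⁻¹ : G) := by
  simpa only [inv_inv] using conj_eq_of_mk_eq hTab ht (hσ (g⁻¹ : G)).symm

theorem normal_of_sigma_conj_mem [T.Normal] (hTab : ∀ a b : G, a ∈ T → b ∈ T → a * b = b * a)
    (hσ : ∀ w : G ⧸ T, (QuotientGroup.mk (σ w) : G ⧸ T) = w) {S : Subgroup G} (hST : S ≤ T)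
    (hSinv : ∀ w : G ⧸ T, ∀ s : G, s ∈ S → (σ w)⁻¹ * s * σ w ∈ S) : S.Normal where
  conj_mem s hs g := by
    rw [conj_eq_sigma_conj hTab hσ (hST hs)]
    exact hSinv _ s hs

theorem splusSet_eq [T.Normal] (hTab : ∀ a b : G, a ∈ T → b ∈ T → a * b = b * a)
    (hσ : ∀ w : G ⧸ T, (QuotientGroup.mk (σ w) : G ⧸ T) = w) {S : Subgroup G} [S.Normal] :
    splusSet T σ S = ↑(T ⊓ S.upperCentralSeriesStep) := by
  ext t
  refine and_congr_right fun ht => ⟨fun h y => ?_, fun h w => ?_⟩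
  · rw [← inv_mem_iff, commutatorElement_inv, commutatorElement_def,
      conj_eq_sigma_conj hTab hσ ht]
    exact h _
  · simpa only [commutatorElement_def, mul_inv_rev, inv_inv, mul_assoc] using inv_mem (h (σ w)⁻¹)

theorem sigma_mk_inv_mul_mem (hσ : ∀ w : G ⧸ T, (QuotientGroup.mk (σ w) : G ⧸ T) = w)
    (g : G) : (σ g)⁻¹ * g ∈ T := by
  rw [← QuotientGroup.eq, hσ]

theorem mem_fullSet_iff [T.Normal] (hσ : ∀ w : G ⧸ T, (QuotientGroup.mk (σ w) : G ⧸ T) = w)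
    {A : Set G} (hA : A ⊆ T) {g : G} : g ∈ fullSet T σ A ↔ (σ g)⁻¹ * g ∈ A := by
  constructor
  · rintro ⟨w, s, hs, rfl⟩
    rwa [QuotientGroup.mk_mul, hσ, (QuotientGroup.eq_one_iff s).mpr (hA hs), mul_one,
      inv_mul_cancel_left]
  · exact fun h => ⟨g, _, h, (mul_inv_cancel_left _ _).symm⟩

variable {S HS : Subgroup G}

theorem sigma_mem_of_coe_eq_fullSet (hHS : (HS : Set G) = fullSet T σ (S : Set G))
    (w : G ⧸ T) : σ w ∈ HS := by
  rw [← SetLike.mem_coe, hHS]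
  exact ⟨w, 1, S.one_mem, (mul_one _).symm⟩

theorem le_of_coe_eq_fullSet (hHS : (HS : Set G) = fullSet T σ (S : Set G)) : S ≤ HS :=
  fun s hs => by
    have hσs : σ s * s ∈ HS := by rw [← SetLike.mem_coe, hHS]; exact ⟨s, s, hs, rfl⟩
    exact (HS.mul_mem_cancel_left (sigma_mem_of_coe_eq_fullSet hHS s)).mp hσs

theorem mem_splusSet_of_mem_normalizer [T.Normal]
    (hσ : ∀ w : G ⧸ T, (QuotientGroup.mk (σ w) : G ⧸ T) = w) (hST : S ≤ T)
    (hHS : (HS : Set G) = fullSet T σ (S : Set G)) {t : G} (ht : t ∈ T)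
    (htN : t ∈ normalizer (HS : Set G)) : t ∈ splusSet T σ S := by
  refine ⟨ht, fun w => ?_⟩
  have hconj : t * σ w * t⁻¹ ∈ HS :=
    (mem_normalizer_iff.mp htN _).mp (sigma_mem_of_coe_eq_fullSet hHS w)
  have hmk : ((t * σ w * t⁻¹ : G) : G ⧸ T) = w := by
    simp [QuotientGroup.mk_mul, (QuotientGroup.eq_one_iff t).mpr ht, hσ]
  rw [← SetLike.mem_coe, hHS, mem_fullSet_iff hσ (fun _ hs => hST hs), hmk] at hconj
  simpa only [mul_assoc, SetLike.mem_coe] using hconj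

theorem normalizer_eq_fullSet_splusSet [T.Normal]
    (hTab : ∀ a b : G, a ∈ T → b ∈ T → a * b = b * a)
    (hσ : ∀ w : G ⧸ T, (QuotientGroup.mk (σ w) : G ⧸ T) = w) (hST : S ≤ T) [S.Normal]
    (hHS : (HS : Set G) = fullSet T σ (S : Set G)) :
    (normalizer (HS : Set G) : Set G) = fullSet T σ (splusSet T σ S) := by
  have hσN (w : G ⧸ T) : σ w ∈ normalizer (HS : Set G) :=
    le_normalizer (sigma_mem_of_coe_eq_fullSet hHS w)
  ext g
  constructor
  · intro hg
    have htN : (σ g)⁻¹ * g ∈ normalizer (HS : Set G) := mul_mem (inv_mem (hσN g)) hg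
    exact ⟨g, _, mem_splusSet_of_mem_normalizer hσ hST hHS (sigma_mk_inv_mul_mem hσ g) htN,
      (mul_inv_cancel_left _ _).symm⟩
  · rintro ⟨w, t, ht, rfl⟩
    rw [splusSet_eq hTab hσ] at ht
    exact mul_mem (hσN w) (upperCentralSeriesStep_le_normalizer (le_of_coe_eq_fullSet hHS) ht.2)

end FullSubgroup

theorem splus_subgroup_and_normalizer_general
    {G : Type*} [Group G] (T : Subgroup G) [T.Normal]
    (hTab : ∀ a b : G, a ∈ T → b ∈ T → a * b = b * a)
    (σ : G ⧸ T → G) (hσ : ∀ w : G ⧸ T, (QuotientGroup.mk (σ w) : G ⧸ T) = w)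
    (S : Subgroup G) (hST : S ≤ T)
    (hSinv : ∀ w : G ⧸ T, ∀ s : G, s ∈ S → (σ w)⁻¹ * s * σ w ∈ S)
    (hcoc : ∀ v w : G ⧸ T, σ v * σ w * (σ (v * w))⁻¹ ∈ S)
    (HS : Subgroup G) (hHS : (HS : Set G) = fullSet T σ (S : Set G)) :
    -- `S⁺` is a subgroup of `T` containing `S`:
    ((1 : G) ∈ splusSet T σ S ∧
      (∀ a b : G, a ∈ splusSet T σ S → b ∈ splusSet T σ S → a * b ∈ splusSet T σ S) ∧
      (∀ a : G, a ∈ splusSet T σ S → a⁻¹ ∈ splusSet T σ S) ∧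
      (∀ s : G, s ∈ S → s ∈ splusSet T σ S) ∧
      (∀ t : G, t ∈ splusSet T σ S → t ∈ T)) ∧
    -- `S⁺` satisfies the same invariance and cocycle conditions:
    ((∀ w : G ⧸ T, ∀ t : G, t ∈ splusSet T σ S → (σ w)⁻¹ * t * σ w ∈ splusSet T σ S) ∧
      (∀ w : G ⧸ T, ∀ t : G, t ∈ splusSet T σ S → σ w * t * (σ w)⁻¹ ∈ splusSet T σ S) ∧
      (∀ v w : G ⧸ T, σ v * σ w * (σ (v * w))⁻¹ ∈ splusSet T σ S)) ∧
    -- the normalizer of `H(S, σ)` is `H(S⁺, σ)`: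
    (Subgroup.normalizer (HS : Set G) : Set G) = fullSet T σ (splusSet T σ S) := by
  have : S.Normal := normal_of_sigma_conj_mem hTab hσ hST hSinv
  have hS : S ≤ T ⊓ S.upperCentralSeriesStep := le_inf hST (le_upperCentralSeriesStep S)
  refine ⟨?_, ?_, normalizer_eq_fullSet_splusSet hTab hσ hST hHS⟩
  all_goals simp only [splusSet_eq hTab hσ, SetLike.mem_coe]
  · exact ⟨one_mem _, fun _ _ => mul_mem, fun _ => inv_mem, fun _ hs => hS hs,
      fun _ ht => ht.1⟩
  · exact ⟨fun w t ht => by simpa using Normal.conj_mem inferInstance t ht (σ w)⁻¹,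
      fun w t ht => Normal.conj_mem inferInstance t ht (σ w), fun v w => hS (hcoc v w)⟩

/-- In the `H(S, σ)` setting (`T` an abelian normal subgroup of `G`,
`W = G/T`, `σ` a set-theoretic section of the projection `π : G → W`, and `S ≤ T` a
subgroup satisfying `σ(w)⁻¹ S σ(w) = S` and the cocycle condition
`σ(v)σ(w)σ(vw)⁻¹ ∈ S`): the set `S⁺` is a subgroup of `T` containing `S`, it satisfies
the same two conditions as `S`, and the normalizer of `H(S, σ)` in `G` is exactly
`H(S⁺, σ)`. -/
theorem splus_subgroup_and_normalizer
    {G : Type*} [Group G] (T : Subgroup G) [T.Normal]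
    (hTab : ∀ a b : G, a ∈ T → b ∈ T → a * b = b * a)
    (σ : G ⧸ T → G) (hσ : ∀ w : G ⧸ T, (QuotientGroup.mk (σ w) : G ⧸ T) = w)
    (S : Subgroup G) (hST : S ≤ T)
    (hSinv : ∀ w : G ⧸ T, ∀ s : G, s ∈ S → (σ w)⁻¹ * s * σ w ∈ S)
    (hSinv' : ∀ w : G ⧸ T, ∀ s : G, s ∈ S → σ w * s * (σ w)⁻¹ ∈ S)
    (hcoc : ∀ v w : G ⧸ T, σ v * σ w * (σ (v * w))⁻¹ ∈ S)
    (HS : Subgroup G) (hHS : (HS : Set G) = fullSet T σ (S : Set G)) :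
    -- `S⁺` is a subgroup of `T` containing `S`:
    ((1 : G) ∈ splusSet T σ S ∧
      (∀ a b : G, a ∈ splusSet T σ S → b ∈ splusSet T σ S → a * b ∈ splusSet T σ S) ∧
      (∀ a : G, a ∈ splusSet T σ S → a⁻¹ ∈ splusSet T σ S) ∧
      (∀ s : G, s ∈ S → s ∈ splusSet T σ S) ∧
      (∀ t : G, t ∈ splusSet T σ S → t ∈ T)) ∧
    -- `S⁺` satisfies the same invariance and cocycle conditions:
    ((∀ w : G ⧸ T, ∀ t : G, t ∈ splusSet T σ S → (σ w)⁻¹ * t * σ w ∈ splusSet T σ S) ∧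
      (∀ w : G ⧸ T, ∀ t : G, t ∈ splusSet T σ S → σ w * t * (σ w)⁻¹ ∈ splusSet T σ S) ∧
      (∀ v w : G ⧸ T, σ v * σ w * (σ (v * w))⁻¹ ∈ splusSet T σ S)) ∧
    -- the normalizer of `H(S, σ)` is `H(S⁺, σ)`:
    (Subgroup.normalizer (HS : Set G) : Set G) = fullSet T σ (splusSet T σ S) :=
  splus_subgroup_and_normalizer_general T hTab σ hσ S hST hSinv hcoc HS hHS
end

section
/- Let H be a compact Lie group equipped with a bi-invariant metric inducing its topology, and let q: H → (ℝ/ℤ)^d be a continuous surjective group homomorphism with d ≥ 1. For each n ≥ 1 let H{n} = q⁻¹(T[n]) be the preimage of the subgroup T[n] = ((1/n)ℤ/ℤ)^d of n-torsion points of the torus. Then each H{n} is a proper closed subgroup of H, and the Hausdorff distance between H{n} and H tends to 0 as n → ∞. In particular, a compact Lie group admitting a continuous surjective homomorphism onto a torus of positive dimension is not an isolated point of Sub(H) in the h-topology; equivalently, if K is a closed normal subgroup of H with H/K a torus of positive dimension, then H is a limit of proper closed subgroups of itself. -/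
/-!
A continuous surjection `q` of a compact group onto the torus is open, so `q` maps the `ε`-ball
about `1` onto a neighbourhood of `1`. In angle coordinates `T[n]` is `π / n`-dense in the torus,
so for large `n` every `q x` is a torsion point times the image of some `h` with `dist 1 h < ε`;
by left invariance `x * h ∈ q⁻¹(T[n])` is then `ε`-close to `x`. Hence `q⁻¹(T[n])` tends to `H`
in the Hausdorff metric while staying proper, since `T[n]` is a proper subgroup for `d, n ≥ 1`.
-/

open TopologicalSpace

/-- `G` itself, as a point of `Sub(G)`. -/
def topSub (G : Type*) [Group G] [TopologicalSpace G] : SubG G :=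
  ⟨⊤, by rw [Subgroup.coe_top]; exact isClosed_univ⟩

/-- The subgroup `T[n]` of `n`-torsion points of the standard `d`-dimensional torus
(modelled multiplicatively as `(Fin d) → Circle`, where `Circle ≅ ℝ/ℤ`). -/
noncomputable def torsionSub (d n : ℕ) : Subgroup (Fin d → Circle) where
  carrier := {v | ∀ i, v i ^ n = 1}
  one_mem' := fun i => one_pow n
  mul_mem' := by
    intro a b ha hb i
    rw [Pi.mul_apply, mul_pow, ha i, hb i, one_mul]
  inv_mem' := by
    intro a ha i
    rw [Pi.inv_apply, inv_pow, ha i, inv_one]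

open Filter Topology Metric

lemma isClosed_torsionSub (d n : ℕ) : IsClosed (torsionSub d n : Set (Fin d → Circle)) := by
  change IsClosed {v : Fin d → Circle | ∀ i, v i ^ n = 1}
  simp only [Set.ofPred_forall]
  exact isClosed_iInter fun i => isClosed_eq (by fun_prop) continuous_const

lemma torsionSub_ne_top {d n : ℕ} (hd : 1 ≤ d) (hn : 1 ≤ n) : torsionSub d n ≠ ⊤ := by
  intro htop
  have hmem : (fun _ => Circle.exp (Real.pi / n)) ∈ torsionSub d n := htop ▸ Subgroup.mem_top _
  have hpow := hmem ⟨0, hd⟩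
  rw [← Circle.exp_natCast_mul, mul_div_cancel₀ _ (by positivity)] at hpow
  exact Circle.exp_pi_ne_one hpow

lemma exists_circleExp_pow_eq_one_abs_sub_le (s : ℝ) {n : ℕ} (hn : 0 < n) :
    ∃ t : ℝ, Circle.exp t ^ n = 1 ∧ |t - s| ≤ Real.pi / n := by
  set x := n * s / (2 * Real.pi)
  refine ⟨2 * Real.pi / n * round x, ?_, ?_⟩
  · rw [← Circle.exp_natCast_mul, ← mul_assoc, mul_div_cancel₀ _ (by positivity)]
    exact Circle.exp_two_pi_mul_int _
  · have hs : s = 2 * Real.pi / n * x := by simp only [x]; field_simp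
    calc |2 * Real.pi / n * round x - s| = 2 * Real.pi / n * |round x - x| := by
          rw [hs, ← mul_sub, abs_mul, abs_of_pos (by positivity)]
      _ ≤ 2 * Real.pi / n * (1 / 2) := by gcongr; rw [abs_sub_comm]; exact abs_sub_round x
      _ = Real.pi / n := by ring

lemma eventually_exists_mem_torsionSub_inv_mul_mem {d : ℕ} {U : Set (Fin d → Circle)}
    (hU : U ∈ 𝓝 1) : ∀ᶠ n in atTop, ∀ y, ∃ t ∈ torsionSub d n, y⁻¹ * t ∈ U := by
  set E : (Fin d → ℝ) → Fin d → Circle := fun θ i => Circle.exp (θ i)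
  have hE : Continuous E := by fun_prop
  have hE0 : E 0 = 1 := by funext; simp [E]
  obtain ⟨δ, hδ, hball⟩ := Metric.mem_nhds_iff.mp <|
    hE.continuousAt.preimage_mem_nhds (hE0 ▸ hU)
  filter_upwards [(tendsto_const_div_atTop_nhds_zero_nat Real.pi).eventually (gt_mem_nhds hδ),
    eventually_gt_atTop 0] with n hnδ hn y
  choose θ hθ using fun i => Circle.exp_surjective (y i)
  choose t ht hdist using fun i => exists_circleExp_pow_eq_one_abs_sub_le (θ i) hn
  refine ⟨E t, ht, ?_⟩
  have hsub : y⁻¹ * E t = E (t - θ) := by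
    funext i
    simp [E, ← hθ, Circle.exp_sub, div_eq_inv_mul]
  rw [hsub]
  refine hball (mem_ball_zero_iff.mpr ((pi_norm_lt_iff hδ).mpr fun i => ?_))
  exact (hdist i).trans_lt hnδ

lemma eventually_forall_exists_mem_comap_dist_lt {ι G H : Type*} [Group G] [TopologicalSpace G]
    [Group H] [MetricSpace H] [IsIsometricSMul H H] {q : H →* G} (hq : IsOpenMap q) {l : Filter ι}
    {K : ι → Subgroup G} (hK : ∀ U ∈ 𝓝 (1 : G), ∀ᶠ i in l, ∀ y, ∃ t ∈ K i, y⁻¹ * t ∈ U)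
    {ε : ℝ} (hε : 0 < ε) : ∀ᶠ i in l, ∀ x : H, ∃ z ∈ (K i).comap q, dist x z < ε := by
  have hU : q '' ball 1 ε ∈ 𝓝 (1 : G) := by
    simpa using hq.image_mem_nhds (ball_mem_nhds 1 hε)
  filter_upwards [hK _ hU] with i hi x
  obtain ⟨t, ht, h, hh, hqh⟩ := hi (q x)
  refine ⟨x * h, by simpa [hqh] using ht, ?_⟩
  have hdist := dist_mul_left x 1 h
  rw [mul_one] at hdist
  rwa [hdist, dist_comm]

lemma tendsto_hausdorffDist_univ_of_eventually {ι X : Type*} [PseudoMetricSpace X] {l : Filter ι}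
    {s : ι → Set X} (h : ∀ ε > 0, ∀ᶠ i in l, ∀ x, ∃ z ∈ s i, dist x z < ε) :
    Tendsto (fun i => hausdorffDist (s i) Set.univ) l (𝓝 0) := by
  refine Metric.tendsto_nhds.mpr fun ε hε => ?_
  filter_upwards [h (ε / 2) (half_pos hε)] with i hi
  have hle : hausdorffDist (s i) Set.univ ≤ ε / 2 :=
    hausdorffDist_le_of_mem_dist (half_pos hε).le
      (fun x _ => ⟨x, Set.mem_univ x, by simp [(half_pos hε).le]⟩)
      (fun x _ => (hi x).imp fun z ⟨hz, hxz⟩ => ⟨hz, hxz.le⟩)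
  rw [Real.dist_eq, sub_zero, abs_of_nonneg hausdorffDist_nonneg]
  linarith

lemma SubG.tendsto_nhds_of_tendsto_hausdorffDist {ι G : Type*} [Group G] [MetricSpace G]
    [CompactSpace G] {l : Filter ι} {u : ι → SubG G} {K : SubG G}
    (h : Tendsto (fun i => hausdorffDist ((u i).1 : Set G) K.1) l (𝓝 0)) :
    Tendsto u l (𝓝 K) := by
  rw [(Topology.IsInducing.induced _).tendsto_nhds_iff, tendsto_iff_edist_tendsto_0]
  have hedist : ∀ i, edist (⟨(u i).1, (u i).2⟩ : Closeds G) ⟨K.1, K.2⟩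
      = ENNReal.ofReal (hausdorffDist ((u i).1 : Set G) K.1) := fun i => by
    rw [Closeds.edist_eq, hausdorffDist, ENNReal.ofReal_toReal]
    · rfl
    · exact hausdorffEDist_ne_top_of_nonempty_of_bounded (OneMemClass.coe_nonempty (u i).1)
        (OneMemClass.coe_nonempty K.1) isBounded_of_compactSpace isBounded_of_compactSpace
  simpa [hedist] using ENNReal.tendsto_ofReal h

theorem not_isolated_of_surjects_onto_torus_general
    {H : Type*} [Group H] [MetricSpace H] [IsTopologicalGroup H] [CompactSpace H]
    (hbi : BiInvariantMetric H)
    (d : ℕ) (hd : 1 ≤ d)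
    (q : H →* (Fin d → Circle)) (hqc : Continuous q) (hqs : Function.Surjective q) :
    (∀ n : ℕ, 1 ≤ n →
      (torsionSub d n).comap q ≠ ⊤ ∧ IsClosed (((torsionSub d n).comap q : Subgroup H) : Set H)) ∧
    Filter.Tendsto
      (fun n : ℕ => Metric.hausdorffDist (((torsionSub d n).comap q : Subgroup H) : Set H) Set.univ)
      Filter.atTop (nhds 0) ∧
    ¬ IsOpen ({topSub H} : Set (SubG H)) ∧
    ∃ u : ℕ → SubG H, (∀ n, u n ≠ topSub H) ∧
      Filter.Tendsto u Filter.atTop (nhds (topSub H)) := by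
  have hq : IsOpenMap q := q.isOpenMap_of_sigmaCompact hqs hqc
  have : IsIsometricSMul H H := ⟨fun g => Isometry.of_dist_eq fun x y => (hbi g x y).1⟩
  have hproper : ∀ n : ℕ, 1 ≤ n →
      (torsionSub d n).comap q ≠ ⊤ ∧ IsClosed (((torsionSub d n).comap q : Subgroup H) : Set H) :=
    fun n hn => ⟨by
      rw [← Subgroup.comap_top q, (Subgroup.comap_injective hqs).ne_iff]
      exact torsionSub_ne_top hd hn, (isClosed_torsionSub d n).preimage hqc⟩
  have hdist := tendsto_hausdorffDist_univ_of_eventually fun ε hε =>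
    eventually_forall_exists_mem_comap_dist_lt hq
      (fun _ hU => eventually_exists_mem_torsionSub_inv_mul_mem hU) hε
  let u : ℕ → SubG H := fun n => ⟨(torsionSub d (n + 1)).comap q, (hproper (n + 1) n.succ_pos).2⟩
  have hu : ∀ n, u n ≠ topSub H := fun n h =>
    (hproper (n + 1) n.succ_pos).1 (congrArg Subtype.val h)
  have hut : Tendsto u atTop (𝓝 (topSub H)) := SubG.tendsto_nhds_of_tendsto_hausdorffDist <| by
    simpa [u, topSub, Function.comp_def] using hdist.comp (tendsto_add_atTop_nat 1)
  refine ⟨hproper, hdist, fun hopen => ?_, u, hu, hut⟩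
  obtain ⟨n, hn⟩ := (hut.eventually (hopen.mem_nhds rfl)).exists
  exact hu n hn

/-- **Statement 18.** Let `H` be a compact Lie group with a bi-invariant metric inducing
its topology, and let `q : H → (ℝ/ℤ)^d` be a continuous surjective homomorphism with
`d ≥ 1`.  For `n ≥ 1` let `H{n} = q⁻¹(T[n])`.  Then each `H{n}` is a proper closed
subgroup of `H`, and the Hausdorff distance between `H{n}` and `H` tends to `0` as
`n → ∞`.  In particular `H` is not an isolated point of `Sub(H)` in the `h`-topology:
it is a limit of proper closed subgroups of itself. -/
theorem not_isolated_of_surjects_onto_torus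
    {H : Type*} [Group H] [MetricSpace H] [IsTopologicalGroup H] [CompactSpace H]
    (hbi : BiInvariantMetric H) (hlie : IsLieGroupStruct H)
    (d : ℕ) (hd : 1 ≤ d)
    (q : H →* (Fin d → Circle)) (hqc : Continuous q) (hqs : Function.Surjective q) :
    (∀ n : ℕ, 1 ≤ n →
      (torsionSub d n).comap q ≠ ⊤ ∧ IsClosed (((torsionSub d n).comap q : Subgroup H) : Set H)) ∧
    Filter.Tendsto
      (fun n : ℕ => Metric.hausdorffDist (((torsionSub d n).comap q : Subgroup H) : Set H) Set.univ)
      Filter.atTop (nhds 0) ∧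
    ¬ IsOpen ({topSub H} : Set (SubG H)) ∧
    ∃ u : ℕ → SubG H, (∀ n, u n ≠ topSub H) ∧
      Filter.Tendsto u Filter.atTop (nhds (topSub H)) :=
  not_isolated_of_surjects_onto_torus_general hbi d hd q hqc hqs
end
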